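/- arXiv:1807.07350 — 6 statements merged into one kernel-verified Lean document; each statement's English description precedes it below -/
import Mathlib

section
/- Let (X,‖·‖) be a real Banach space, 𝓘 ⊂ (0,∞) a nonempty compact interval, and A, B : X → ℝ functionals of class C¹ with A(0) = B(0) = 0, B(u) ≥ 0 for all u ∈ X, and such that either A(u) → +∞ or B(u) → +∞ as ‖u‖ → ∞; for λ ∈ 𝓘 set I_λ := A − λB. If the family {I_λ}_{λ∈𝓘} has a uniform mountain pass geometry, then the mapping λ ↦ c_{mp,λ} is left continuous on 𝓘. -/
open Filter Topology Set MeasureTheory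

/-- The mountain pass level of a functional `I` on `X`:
`c_mp = inf over paths γ ∈ C([0,1],X) with γ 0 = 0, I (γ 1) < 0 of max_{t} I (γ t)`. -/
noncomputable def mpLevel {X : Type*} [NormedAddCommGroup X] [NormedSpace ℝ X]
    (I : X → ℝ) : ℝ :=
  sInf ((fun γ : C(unitInterval, X) => ⨆ t : unitInterval, I (γ t)) ''
    {γ : C(unitInterval, X) | γ (0 : unitInterval) = 0 ∧ I (γ (1 : unitInterval)) < 0})

lemma mpLevel_bddBelow {X : Type*} [NormedAddCommGroup X] [NormedSpace ℝ X]
    (I : X → ℝ) (h : 0 < mpLevel I) :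
    BddBelow ((fun γ : C(unitInterval, X) => ⨆ t : unitInterval, I (γ t)) ''
      {γ : C(unitInterval, X) | γ (0 : unitInterval) = 0 ∧ I (γ (1 : unitInterval)) < 0}) := by
  by_contra hb
  rw [mpLevel, Real.sInf_of_not_bddBelow hb] at h
  exact lt_irrefl _ h

lemma mpLevel_mono {X : Type*} [NormedAddCommGroup X] [NormedSpace ℝ X]
    (I J : X → ℝ) (hIJ : ∀ u, I u ≤ J u) (hJ : Continuous J)
    (hneJ : ({γ : C(unitInterval, X) | γ (0 : unitInterval) = 0 ∧
        J (γ (1 : unitInterval)) < 0}).Nonempty)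
    (hbI : BddBelow ((fun γ : C(unitInterval, X) => ⨆ t : unitInterval, I (γ t)) ''
      {γ : C(unitInterval, X) | γ (0 : unitInterval) = 0 ∧ I (γ (1 : unitInterval)) < 0})) :
    mpLevel I ≤ mpLevel J := by
  rw [mpLevel, mpLevel]
  refine le_csInf (hneJ.image _) ?_
  rintro x ⟨γ, ⟨hγ0, hγ1⟩, rfl⟩
  have hmem : (⨆ t : unitInterval, I (γ t)) ∈
      ((fun γ : C(unitInterval, X) => ⨆ t : unitInterval, I (γ t)) ''
      {γ : C(unitInterval, X) | γ (0 : unitInterval) = 0 ∧ I (γ (1 : unitInterval)) < 0}) :=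
    ⟨γ, ⟨hγ0, lt_of_le_of_lt (hIJ _) hγ1⟩, rfl⟩
  have hbdd : BddAbove (Set.range fun t : unitInterval => J (γ t)) :=
    (isCompact_range (hJ.comp γ.continuous)).bddAbove
  exact (csInf_le hbI hmem).trans
    (ciSup_le fun t => (hIJ (γ t)).trans (le_ciSup hbdd t))

theorem statement1 {X : Type*} [NormedAddCommGroup X] [NormedSpace ℝ X] [CompleteSpace X]
    (a b : ℝ) (ha : 0 < a) (hab : a ≤ b)
    (A B : X → ℝ) (hA : ContDiff ℝ 1 A) (hB : ContDiff ℝ 1 B)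
    (hA0 : A 0 = 0) (hB0 : B 0 = 0) (hBnonneg : ∀ u, 0 ≤ B u)
    (hcoercive :
      Tendsto A (comap (fun u : X => ‖u‖) atTop) atTop ∨
      Tendsto B (comap (fun u : X => ‖u‖) atTop) atTop)
    (hMPgeom : ∀ lam ∈ Set.Icc a b,
      ({γ : C(unitInterval, X) | γ (0 : unitInterval) = 0 ∧
          A (γ (1 : unitInterval)) - lam * B (γ (1 : unitInterval)) < 0}).Nonempty ∧
      0 < mpLevel (fun u => A u - lam * B u)) :
    ∀ lam ∈ Set.Icc a b,
      ContinuousWithinAt (fun mu => mpLevel (fun u => A u - mu * B u))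
        (Set.Icc a lam) lam := by
  intro lam hlam
  have hAc := hA.continuous
  have hBc := hB.continuous
  have hIcont : ∀ mu : ℝ, Continuous (fun u => A u - mu * B u) :=
    fun mu => hAc.sub (continuous_const.mul hBc)
  -- monotonicity: for μ ≤ lam in [a,b], c_lam ≤ c_μ
  have hmono : ∀ mu ∈ Set.Icc a lam,
      mpLevel (fun u => A u - lam * B u) ≤ mpLevel (fun u => A u - mu * B u) := by
    intro mu hmu
    have hmu' : mu ∈ Set.Icc a b := ⟨hmu.1, hmu.2.trans hlam.2⟩
    refine mpLevel_mono _ _ (fun u => ?_) (hIcont mu) (hMPgeom mu hmu').1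
      (mpLevel_bddBelow _ (hMPgeom lam hlam).2)
    have := hBnonneg u
    nlinarith [hmu.2]
  rw [Metric.continuousWithinAt_iff]
  intro ε hε
  have hSne := ((hMPgeom lam hlam).1).image
    (fun γ : C(unitInterval, X) => ⨆ t : unitInterval, (fun u => A u - lam * B u) (γ t))
  obtain ⟨xv, hxmem, hxlt⟩ := exists_lt_of_csInf_lt hSne
    (show mpLevel (fun u => A u - lam * B u) <
      mpLevel (fun u => A u - lam * B u) + ε / 2 by linarith)
  obtain ⟨γ, ⟨hγ0, hγ1⟩, rfl⟩ := hxmem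
  -- bounds on B along γ and on I_lam along γ
  have hbddB : BddAbove (Set.range fun t : unitInterval => B (γ t)) :=
    (isCompact_range (hBc.comp γ.continuous)).bddAbove
  set M := ⨆ t : unitInterval, B (γ t) with hM
  have hBleM : ∀ t : unitInterval, B (γ t) ≤ M := fun t => le_ciSup hbddB t
  have hM0 : 0 ≤ M := (hBnonneg _).trans (hBleM 0)
  set x := ⨆ t : unitInterval, (A (γ t) - lam * B (γ t)) with hx
  have hxlt' : x < mpLevel (fun u => A u - lam * B u) + ε / 2 := hxlt
  have hbddI : BddAbove (Set.range fun t : unitInterval => A (γ t) - lam * B (γ t)) :=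
    (isCompact_range ((hIcont lam).comp γ.continuous)).bddAbove
  have hIlex : ∀ t : unitInterval, A (γ t) - lam * B (γ t) ≤ x := fun t => le_ciSup hbddI t
  have hneg : 0 < -(A (γ (1:unitInterval)) - lam * B (γ (1:unitInterval))) := by linarith
  set d := min (ε / (2 * (M + 1)))
      ((-(A (γ (1:unitInterval)) - lam * B (γ (1:unitInterval)))) / (2 * (M + 1))) with hd
  have hMpos : (0:ℝ) < 2 * (M + 1) := by linarith
  have hdpos : 0 < d := lt_min (div_pos hε hMpos) (div_pos hneg hMpos)
  refine ⟨d, hdpos, ?_⟩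
  intro mu hmu hdist
  have hmule : mu ≤ lam := hmu.2
  have hgap : 0 ≤ lam - mu := by linarith
  have hgaplt : lam - mu < d := by
    rw [Real.dist_eq, abs_of_nonpos (by linarith)] at hdist
    linarith
  have hd1 : d * (2 * (M + 1)) ≤ ε := by
    have := min_le_left (ε / (2 * (M + 1)))
      ((-(A (γ (1:unitInterval)) - lam * B (γ (1:unitInterval)))) / (2 * (M + 1)))
    rw [hd]
    calc min _ _ * (2 * (M + 1)) ≤ (ε / (2 * (M + 1))) * (2 * (M + 1)) := by
          exact mul_le_mul_of_nonneg_right this (le_of_lt hMpos)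
      _ = ε := div_mul_cancel₀ _ (ne_of_gt hMpos)
  have hd2 : d * (2 * (M + 1)) ≤ -(A (γ (1:unitInterval)) - lam * B (γ (1:unitInterval))) := by
    have := min_le_right (ε / (2 * (M + 1)))
      ((-(A (γ (1:unitInterval)) - lam * B (γ (1:unitInterval)))) / (2 * (M + 1)))
    rw [hd]
    calc min _ _ * (2 * (M + 1))
        ≤ ((-(A (γ (1:unitInterval)) - lam * B (γ (1:unitInterval)))) / (2 * (M + 1)))
            * (2 * (M + 1)) := mul_le_mul_of_nonneg_right this (le_of_lt hMpos)
      _ = _ := div_mul_cancel₀ _ (ne_of_gt hMpos)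
  -- key product bound : (lam - mu) * B(γ t) ≤ d * M
  have hprod : ∀ t : unitInterval, (lam - mu) * B (γ t) ≤ d * M := fun t =>
    mul_le_mul hgaplt.le (hBleM t) (hBnonneg _) hdpos.le
  -- γ is admissible for μ
  have hγmu : A (γ (1:unitInterval)) - mu * B (γ (1:unitInterval)) < 0 := by
    have h1 := hprod 1
    nlinarith [hdpos]
  have hmu' : mu ∈ Set.Icc a b := ⟨hmu.1, hmule.trans hlam.2⟩
  -- c_mu ≤ sup I_mu γ ≤ x + ε/2
  have hsup : mpLevel (fun u => A u - mu * B u) ≤ x + ε / 2 := by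
    have hmem : (⨆ t : unitInterval, (A (γ t) - mu * B (γ t))) ∈
        ((fun γ : C(unitInterval, X) =>
          ⨆ t : unitInterval, (fun u => A u - mu * B u) (γ t)) ''
        {γ : C(unitInterval, X) | γ (0 : unitInterval) = 0 ∧
          (fun u => A u - mu * B u) (γ (1 : unitInterval)) < 0}) := ⟨γ, ⟨hγ0, hγmu⟩, rfl⟩
    refine (csInf_le (mpLevel_bddBelow _ (hMPgeom mu hmu').2) hmem).trans ?_
    refine ciSup_le fun t => ?_
    have h1 := hprod t
    have h2 := hIlex t
    nlinarith [hdpos, hM0]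
  have hlow := hmono mu hmu
  rw [Real.dist_eq, abs_of_nonneg (by linarith)]
  linarith
end

section
/- Let (X,‖·‖) be a real Banach space, 𝓘 ⊂ (0,∞) a nonempty compact interval, and A, B : X → ℝ even functionals of class C¹ with A(0) = B(0) = 0, B(u) ≥ 0 for all u ∈ X, and such that either A(u) → +∞ or B(u) → +∞ as ‖u‖ → ∞; for λ ∈ 𝓘 set I_λ := A − λB, and assume {I_λ}_{λ∈𝓘} has a uniform symmetric mountain pass geometry. Fix k ∈ ℕ, a point λ ∈ 𝓘, and a strictly increasing sequence {λ_n} ⊂ 𝓘 with λ_n → λ, and assume the (nonincreasing) mapping μ ↦ c_{k,μ} is differentiable at λ with derivative c'_{k,λ}. Then there exist a constant K > 0 (depending only on c'_{k,λ}), an index n₀ ∈ ℕ, and mappings γ_{k,n} ∈ Γ_k for n ≥ n₀ such that for all n ≥ n₀: (S1) for every l ∈ 𝔻_k with I_λ(γ_{k,n}(l)) ≥ c_{k,λ} − (λ − λ_n) one has ‖γ_{k,n}(l)‖ ≤ K; and (S2) max_{l∈𝔻_k} I_λ(γ_{k,n}(l)) ≤ c_{k,λ} + (−c'_{k,λ}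 + 2)(λ − λ_n). -/
open Filter Topology Set MeasureTheory Metric

/-- The class `Γ_k` of odd continuous maps from the unit ball `𝔻_k ⊂ ℝ^k` into `X`
which agree with the given odd map `γ0` on the unit sphere `𝕊^{k-1}`. -/
def smpPaths {X : Type*} [NormedAddCommGroup X] [NormedSpace ℝ X]
    (k : ℕ) (γ0 : EuclideanSpace ℝ (Fin k) → X) :
    Set (EuclideanSpace ℝ (Fin k) → X) :=
  {γ | ContinuousOn γ (closedBall (0 : EuclideanSpace ℝ (Fin k)) 1) ∧
    (∀ l ∈ closedBall (0 : EuclideanSpace ℝ (Fin k)) 1, γ (-l) = - γ l) ∧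
    ∀ l ∈ sphere (0 : EuclideanSpace ℝ (Fin k)) 1, γ l = γ0 l}

/-- The symmetric mountain pass level
`c_k = inf_{γ ∈ Γ_k} max_{l ∈ 𝔻_k} I (γ l)`. -/
noncomputable def smpLevel {X : Type*} [NormedAddCommGroup X] [NormedSpace ℝ X]
    (k : ℕ) (γ0 : EuclideanSpace ℝ (Fin k) → X) (I : X → ℝ) : ℝ :=
  sInf ((fun γ : EuclideanSpace ℝ (Fin k) → X =>
      sSup ((fun l => I (γ l)) '' closedBall (0 : EuclideanSpace ℝ (Fin k)) 1)) ''
    smpPaths k γ0)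


theorem statement4 {X : Type*} [NormedAddCommGroup X] [NormedSpace ℝ X] [CompleteSpace X]
    (a b : ℝ) (ha : 0 < a) (hab : a ≤ b)
    (A B : X → ℝ) (hA : ContDiff ℝ 1 A) (hB : ContDiff ℝ 1 B)
    (hAeven : ∀ u, A (-u) = A u) (hBeven : ∀ u, B (-u) = B u)
    (hA0 : A 0 = 0) (hB0 : B 0 = 0) (hBnonneg : ∀ u, 0 ≤ B u)
    (hcoercive :
      Tendsto A (comap (fun u : X => ‖u‖) atTop) atTop ∨
      Tendsto B (comap (fun u : X => ‖u‖) atTop) atTop)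
    (γ0 : ∀ k : ℕ, EuclideanSpace ℝ (Fin k) → X)
    (hγ0cont : ∀ k, ContinuousOn (γ0 k) (sphere (0 : EuclideanSpace ℝ (Fin k)) 1))
    (hγ0odd : ∀ k, ∀ l ∈ sphere (0 : EuclideanSpace ℝ (Fin k)) 1, γ0 k (-l) = - γ0 k l)
    (hγ0ne : ∀ k, ∀ l ∈ sphere (0 : EuclideanSpace ℝ (Fin k)) 1, γ0 k l ≠ 0)
    (hγ0neg : ∀ k, ∀ lam ∈ Set.Icc a b, ∀ l ∈ sphere (0 : EuclideanSpace ℝ (Fin k)) 1,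
      A (γ0 k l) - lam * B (γ0 k l) < 0)
    (hΓne : ∀ k : ℕ, (smpPaths k (γ0 k)).Nonempty)
    (hpos : ∀ k : ℕ, ∀ lam ∈ Set.Icc a b,
      0 < smpLevel k (γ0 k) (fun u => A u - lam * B u))
    -- fixed k, λ ∈ 𝓘, and a strictly increasing sequence λ_n → λ in 𝓘
    (k : ℕ) (lam : ℝ) (hlam : lam ∈ Set.Icc a b)
    (lamSeq : ℕ → ℝ) (hmono : StrictMono lamSeq)
    (hlamSeq : ∀ n, lamSeq n ∈ Set.Icc a b)
    (hlimSeq : Tendsto lamSeq atTop (𝓝 lam))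
    -- differentiability of μ ↦ c_{k,μ} at λ with derivative c'
    (c' : ℝ)
    (hderiv : HasDerivWithinAt
      (fun mu => smpLevel k (γ0 k) (fun u => A u - mu * B u)) c' (Set.Icc a b) lam) :
    ∃ K : ℝ, 0 < K ∧ ∃ n₀ : ℕ, ∃ γs : ℕ → (EuclideanSpace ℝ (Fin k) → X),
      ∀ n ≥ n₀, γs n ∈ smpPaths k (γ0 k) ∧
        -- (S1)
        (∀ l ∈ closedBall (0 : EuclideanSpace ℝ (Fin k)) 1,
          smpLevel k (γ0 k) (fun u => A u - lam * B u) - (lam - lamSeq n) ≤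
            A (γs n l) - lam * B (γs n l) → ‖γs n l‖ ≤ K) ∧
        -- (S2)
        (∀ l ∈ closedBall (0 : EuclideanSpace ℝ (Fin k)) 1,
          A (γs n l) - lam * B (γs n l) ≤
            smpLevel k (γ0 k) (fun u => A u - lam * B u) + (-c' + 2) * (lam - lamSeq n)) := by
  classical
  set c : ℝ → ℝ := fun μ => smpLevel k (γ0 k) (fun u => A u - μ * B u) with hc
  have hderiv' : HasDerivWithinAt c c' (Set.Icc a b) lam := hderiv
  have hlt_lam : ∀ n, lamSeq n < lam := by
    intro n
    have h1 : lamSeq (n + 1) ≤ lam := hmono.monotone.ge_of_tendsto hlimSeq (n + 1)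
    exact lt_of_lt_of_le (hmono (Nat.lt_succ_self n)) h1
  have hd_pos : ∀ n, 0 < lam - lamSeq n := fun n => sub_pos.mpr (hlt_lam n)
  have hd_le : ∀ n, lam - lamSeq n ≤ b - a := by
    intro n
    have h1 := (hlamSeq n).1
    have h2 := hlam.2
    linarith
  have htend : Tendsto lamSeq atTop (𝓝[Set.Icc a b \ {lam}] lam) := by
    rw [tendsto_nhdsWithin_iff]
    exact ⟨hlimSeq, Filter.Eventually.of_forall fun n =>
      ⟨hlamSeq n, fun h => (hlt_lam n).ne h⟩⟩
  have hslope : Tendsto (fun n => slope c lam (lamSeq n)) atTop (𝓝 c') :=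
    (hasDerivWithinAt_iff_tendsto_slope.mp hderiv').comp htend
  have hslope_ev : ∀ᶠ n in atTop, c' - 1 ≤ slope c lam (lamSeq n) :=
    hslope.eventually (eventually_ge_nhds (by linarith))
  obtain ⟨n₀, hn₀⟩ := Filter.eventually_atTop.mp hslope_ev
  have hc_diff : ∀ n ≥ n₀, c (lamSeq n) - c lam ≤ (-c' + 1) * (lam - lamSeq n) := by
    intro n hn
    have hs := hn₀ n hn
    rw [slope_def_field] at hs
    have hne : lamSeq n - lam < 0 := by linarith [hlt_lam n]
    have hx : (c (lamSeq n) - c lam) / (lamSeq n - lam) * (lamSeq n - lam)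
        = c (lamSeq n) - c lam := div_mul_cancel₀ _ hne.ne
    have hmul := mul_le_mul_of_nonpos_right hs hne.le
    nlinarith
  -- boundedness above of the image of a path
  have hbdd : ∀ (μ : ℝ), ∀ γ ∈ smpPaths k (γ0 k),
      BddAbove ((fun l => A (γ l) - μ * B (γ l)) ''
        closedBall (0 : EuclideanSpace ℝ (Fin k)) 1) := by
    intro μ γ hγ
    have hγc := hγ.1
    have hcont : ContinuousOn (fun l => A (γ l) - μ * B (γ l))
        (closedBall (0 : EuclideanSpace ℝ (Fin k)) 1) :=
      (hA.continuous.comp_continuousOn hγc).sub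
        (continuousOn_const.mul (hB.continuous.comp_continuousOn hγc))
    exact ((isCompact_closedBall _ _).image_of_continuousOn hcont).bddAbove
  -- selection of near-optimal paths
  have hsel : ∀ n, ∃ γ, γ ∈ smpPaths k (γ0 k) ∧
      sSup ((fun l => A (γ l) - lamSeq n * B (γ l)) ''
          closedBall (0 : EuclideanSpace ℝ (Fin k)) 1)
        < c (lamSeq n) + (lam - lamSeq n) := by
    intro n
    have hne : ((fun γ : EuclideanSpace ℝ (Fin k) → X =>
        sSup ((fun l => A (γ l) - lamSeq n * B (γ l)) ''
          closedBall (0 : EuclideanSpace ℝ (Fin k)) 1)) '' smpPaths k (γ0 k)).Nonempty :=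
      (hΓne k).image _
    have hlt : sInf ((fun γ : EuclideanSpace ℝ (Fin k) → X =>
        sSup ((fun l => A (γ l) - lamSeq n * B (γ l)) ''
          closedBall (0 : EuclideanSpace ℝ (Fin k)) 1)) '' smpPaths k (γ0 k))
        < c (lamSeq n) + (lam - lamSeq n) := by
      have : c (lamSeq n) < c (lamSeq n) + (lam - lamSeq n) :=
        lt_add_of_pos_right _ (hd_pos n)
      exact this
    obtain ⟨S, ⟨γ, hγ, rfl⟩, hS⟩ := exists_lt_of_csInf_lt hne hlt
    exact ⟨γ, hγ, hS⟩
  choose γs hγmem hγlt using hsel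
  -- constants
  set MB : ℝ := -c' + 3 with hMB
  set MI : ℝ := c lam + |(-c' + 2)| * (b - a) with hMI
  set MA : ℝ := MI + b * max MB 0 with hMA
  -- the uniform bound K from coercivity
  have hK : ∃ K : ℝ, 0 < K ∧ ∀ u : X, A u ≤ MA → B u ≤ MB → ‖u‖ ≤ K := by
    rcases hcoercive with hco | hco
    · have hev : ∀ᶠ u in comap (fun u : X => ‖u‖) atTop, MA < A u :=
        hco.eventually (eventually_gt_atTop MA)
      rw [Filter.eventually_comap] at hev
      obtain ⟨R, hR⟩ := Filter.eventually_atTop.mp hev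
      refine ⟨max R 1, lt_of_lt_of_le one_pos (le_max_right _ _), fun u hAu _ => ?_⟩
      by_contra hne
      push_neg at hne
      have : MA < A u := hR ‖u‖ (le_trans (le_max_left _ _) hne.le) u rfl
      linarith
    · have hev : ∀ᶠ u in comap (fun u : X => ‖u‖) atTop, MB < B u :=
        hco.eventually (eventually_gt_atTop MB)
      rw [Filter.eventually_comap] at hev
      obtain ⟨R, hR⟩ := Filter.eventually_atTop.mp hev
      refine ⟨max R 1, lt_of_lt_of_le one_pos (le_max_right _ _), fun u _ hBu => ?_⟩
      by_contra hne
      push_neg at hne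
      have : MB < B u := hR ‖u‖ (le_trans (le_max_left _ _) hne.le) u rfl
      linarith
  obtain ⟨K, hKpos, hKbound⟩ := hK
  refine ⟨K, hKpos, n₀, γs, fun n hn => ⟨hγmem n, ?_, ?_⟩⟩
  case _ =>
    -- (S1)
    intro l hl hge
    have hmem := hγmem n
    have hle_sup : A (γs n l) - lamSeq n * B (γs n l) ≤
        sSup ((fun l => A (γs n l) - lamSeq n * B (γs n l)) ''
          closedBall (0 : EuclideanSpace ℝ (Fin k)) 1) :=
      le_csSup (hbdd _ _ hmem) ⟨l, hl, rfl⟩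
    have hsup := hγlt n
    have hcd := hc_diff n hn
    have hBl := hBnonneg (γs n l)
    have hdn := hd_pos n
    -- B bound
    have hB_le : B (γs n l) ≤ MB := by
      have hmul : (lam - lamSeq n) * B (γs n l) ≤ (lam - lamSeq n) * MB := by
        have hexp : (-c' + 1) * (lam - lamSeq n) + 2 * (lam - lamSeq n)
            = (lam - lamSeq n) * MB := by rw [hMB]; ring
        nlinarith
      exact le_of_mul_le_mul_left hmul hdn
    -- I_lam bound
    have hI_le : A (γs n l) - lam * B (γs n l) ≤ c lam + (-c' + 2) * (lam - lamSeq n) := by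
      have hid : A (γs n l) - lam * B (γs n l)
          = (A (γs n l) - lamSeq n * B (γs n l)) - (lam - lamSeq n) * B (γs n l) := by ring
      have hnn : 0 ≤ (lam - lamSeq n) * B (γs n l) := mul_nonneg hdn.le hBl
      have hexp : (-c' + 2) * (lam - lamSeq n)
          = (-c' + 1) * (lam - lamSeq n) + (lam - lamSeq n) := by ring
      linarith
    -- A bound
    have hA_le : A (γs n l) ≤ MA := by
      have h1 : (-c' + 2) * (lam - lamSeq n) ≤ |(-c' + 2)| * (b - a) :=
        le_trans (mul_le_mul_of_nonneg_right (le_abs_self _) hdn.le)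
          (mul_le_mul_of_nonneg_left (hd_le n) (abs_nonneg _))
      have h2 : lam * B (γs n l) ≤ b * max MB 0 := by
        have hBmax : B (γs n l) ≤ max MB 0 := le_trans hB_le (le_max_left _ _)
        have : lam * B (γs n l) ≤ b * B (γs n l) :=
          mul_le_mul_of_nonneg_right hlam.2 hBl
        have : b * B (γs n l) ≤ b * max MB 0 :=
          mul_le_mul_of_nonneg_left hBmax (by linarith)
        linarith
      have hid : A (γs n l) = (A (γs n l) - lam * B (γs n l)) + lam * B (γs n l) := by ring
      rw [hMA, hMI]
      linarith
    exact hKbound _ hA_le hB_le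
  case _ =>
    -- (S2)
    intro l hl
    have hmem := hγmem n
    have hle_sup : A (γs n l) - lamSeq n * B (γs n l) ≤
        sSup ((fun l => A (γs n l) - lamSeq n * B (γs n l)) ''
          closedBall (0 : EuclideanSpace ℝ (Fin k)) 1) :=
      le_csSup (hbdd _ _ hmem) ⟨l, hl, rfl⟩
    have hsup := hγlt n
    have hcd := hc_diff n hn
    have hBl := hBnonneg (γs n l)
    have hdn := hd_pos n
    have hnn : 0 ≤ (lam - lamSeq n) * B (γs n l) := mul_nonneg hdn.le hBl
    have hid : A (γs n l) - lam * B (γs n l)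
        = (A (γs n l) - lamSeq n * B (γs n l)) - (lam - lamSeq n) * B (γs n l) := by ring
    have hexp : (-c' + 2) * (lam - lamSeq n)
        = (-c' + 1) * (lam - lamSeq n) + (lam - lamSeq n) := by ring
    linarith
end

section
/- Let (X,‖·‖) be a real Banach space with topological dual X*, 𝓘 ⊂ (0,∞) a nonempty compact interval, and A, B : X → ℝ functionals of class C¹ with A(0) = B(0) = 0, B(u) ≥ 0 for all u ∈ X, and such that either A(u) → +∞ or B(u) → +∞ as ‖u‖ → ∞; for λ ∈ 𝓘 set I_λ := A − λB, and assume {I_λ}_{λ∈𝓘} has a uniform mountain pass geometry. Fix λ ∈ 𝓘 that is not the left endpoint of 𝓘. If the (nonincreasing) mapping μ ↦ c_{mp,μ} is differentiable at λ, then I_λ admits a bounded Palais–Smale sequence at the mountain pass level c_{mp,λ}: there exists {u_n} ⊂ X with sup_n ‖u_n‖ < ∞, I_λ(u_n) → c_{mp,λ}, and I_λ'(u_n) → 0 in X*. -/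
/-!
Jeanjean's monotonicity trick. Write `I_μ = A - μ B` and `c(μ)` for its mountain pass level.
Differentiability of `c` at `λ` gives `c(λ - δ) ≤ c(λ) + L δ` for small `δ > 0`, so a path `γ₀`
that is `δ`-optimal for `I_{λ-δ}` satisfies `I_λ ∘ γ₀ ≤ c(λ) + (L + 1) δ`, and wherever
`I_λ ∘ γ₀ ≥ c(λ) - δ` we get `δ B = I_{λ-δ} - I_λ ≤ (L + 2) δ`: by coercivity these points stay in a
ball independent of `δ`. Ekeland's principle for `σ ↦ max I_λ ∘ σ` on the paths that agree with
`γ₀` at the endpoints and lie below it yields a path within distance `1` of `γ₀` whose maximum no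
deformation lowers faster than at rate `(L + 1) δ`; deforming it along a pseudo-gradient field shows
that it passes through a point where `|I_λ - c(λ)|` and `‖I_λ'‖` are small. Let `δ → 0`.
-/

open Filter Topology Set

section Ekeland

variable {M : Type*} [PseudoMetricSpace M] {F : M → ℝ} {ε : ℝ} {x y z : M}

/-- The lower set of `x` for the Brezis–Browder order. -/
def ekelandSet (F : M → ℝ) (ε : ℝ) (x : M) : Set M := {y | F y + ε * dist y x ≤ F x}

theorem self_mem_ekelandSet : x ∈ ekelandSet F ε x := by simp [ekelandSet]

theorem le_of_mem_ekelandSet (hε : 0 ≤ ε) (h : y ∈ ekelandSet F ε x) : F y ≤ F x := by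
  have : 0 ≤ ε * dist y x := by positivity
  exact le_of_add_le_of_nonneg_left h this

theorem ekelandSet_trans (hε : 0 ≤ ε) (hy : y ∈ ekelandSet F ε x) (hz : z ∈ ekelandSet F ε y) :
    z ∈ ekelandSet F ε x := by
  simp only [ekelandSet, mem_ofPred_eq] at *
  nlinarith [dist_triangle z y x]

theorem isClosed_ekelandSet (hF : LowerSemicontinuous F) (x : M) :
    IsClosed (ekelandSet F ε x) :=
  (hF.add (continuous_const.mul (continuous_id.dist continuous_const)).lowerSemicontinuous)
    |>.isClosed_preimage (F x)

theorem exists_seq_ekelandSet (hbdd : BddBelow (range F)) (hε : 0 ≤ ε) (x₀ : M) :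
    ∃ x : ℕ → M, x 0 = x₀ ∧ (∀ {m n}, m ≤ n → x n ∈ ekelandSet F ε (x m)) ∧
      ∀ n, ∀ z ∈ ekelandSet F ε (x n), F (x (n + 1)) ≤ F z + 1 / (n + 1) := by
  have step : ∀ (n : ℕ) x, ∃ y ∈ ekelandSet F ε x, ∀ z ∈ ekelandSet F ε x,
      F y ≤ F z + 1 / (n + 1) := by
    intro n x
    obtain ⟨_, ⟨y, hy, rfl⟩, hlt⟩ := exists_lt_of_csInf_lt
      ((Set.nonempty_of_mem (self_mem_ekelandSet (x := x))).image F)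
      (lt_add_of_pos_right _ (by positivity : (0 : ℝ) < 1 / (n + 1)))
    exact ⟨y, hy, fun z hz => by
      linarith [csInf_le (hbdd.mono (image_subset_range F _)) ⟨z, hz, rfl⟩]⟩
  choose next next_mem next_le using step
  refine ⟨fun n => Nat.rec (motive := fun _ => M) x₀ next n, rfl, fun {m n} hmn => ?_,
    fun n => next_le n _⟩
  induction hmn with
  | refl => exact self_mem_ekelandSet
  | step _ ih => exact ekelandSet_trans hε ih (next_mem _ _)

theorem cauchySeq_of_mem_ekelandSet (hbdd : BddBelow (range F)) (hε : 0 < ε) {x : ℕ → M}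
    (hx : ∀ {m n}, m ≤ n → x n ∈ ekelandSet F ε (x m)) : CauchySeq x := by
  have anti : Antitone (F ∘ x) := fun m n h => le_of_mem_ekelandSet (F := F) hε.le (hx h)
  have hbdd' : BddBelow (range (F ∘ x)) := hbdd.mono (range_comp_subset_range x F)
  have hL := tendsto_atTop_ciInf anti hbdd'
  set L := ⨅ n, (F ∘ x) n
  have hdist : ∀ {N m n}, N ≤ m → m ≤ n → dist (x n) (x m) ≤ (F (x N) - L) / ε :=
    fun {N m n} hm hmn => by
      have h : F (x n) + ε * dist (x n) (x m) ≤ F (x m) := hx hmn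
      have hmN : F (x m) ≤ F (x N) := anti hm
      have hLn : L ≤ F (x n) := ciInf_le hbdd' n
      rw [le_div_iff₀ hε]
      linarith
  refine cauchySeq_of_le_tendsto_0 (fun N => (F (x N) - L) / ε) (fun m n N hm hn => ?_) ?_
  · rcases le_total m n with h | h
    · exact dist_comm (x m) (x n) ▸ hdist hm h
    · exact hdist hn h
  · simpa using (hL.sub_const L).div_const ε

theorem LowerSemicontinuous.exists_ekeland [CompleteSpace M] (hF : LowerSemicontinuous F)
    (hbdd : BddBelow (range F)) (hε : 0 < ε) (x₀ : M) :
    ∃ x, ε * dist x x₀ ≤ F x₀ - F x ∧ ∀ y, F x ≤ F y + ε * dist y x := by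
  obtain ⟨x, rfl, hx, hx_le⟩ := exists_seq_ekelandSet hbdd hε.le x₀
  obtain ⟨z, hz⟩ := cauchySeq_tendsto_of_complete (cauchySeq_of_mem_ekelandSet hbdd hε hx)
  have z_mem : ∀ m, z ∈ ekelandSet F ε (x m) := fun m =>
    (isClosed_ekelandSet hF _).mem_of_tendsto hz (eventually_atTop.2 ⟨m, fun n hn => hx hn⟩)
  have hz₀ : F z + ε * dist z (x 0) ≤ F (x 0) := z_mem 0
  refine ⟨z, by linarith, fun y => ?_⟩
  by_contra! hy
  have hFz : ∀ m : ℕ, F z ≤ F y + 1 / (m + 1) := fun m =>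
    (le_of_mem_ekelandSet hε.le (z_mem (m + 1))).trans
      (hx_le m y (ekelandSet_trans hε.le (z_mem m) hy.le))
  have : F z ≤ F y := by
    simpa using ge_of_tendsto' (tendsto_one_div_add_atTop_nhds_zero_nat.const_add (F y)) hFz
  nlinarith [dist_nonneg (x := y) (y := z)]

end Ekeland

theorem DifferentiableWithinAt.exists_le_add_mul_of_left {f : ℝ → ℝ} {s : Set ℝ} {a x : ℝ}
    (hf : DifferentiableWithinAt ℝ f s x) (hs : Ioo a x ⊆ s) (hax : a < x) :
    ∃ L ≥ 0, ∀ ε > 0, ∃ δ ∈ Ioo 0 ε, a < x - δ ∧ f (x - δ) ≤ f x + L * δ := by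
  have hD := (hf.hasDerivWithinAt.mono hs).isLittleO.bound one_pos
  refine ⟨|derivWithin f s x| + 1, by positivity, fun ε hε => ?_⟩
  have : (𝓝[Ioo a x] x).NeBot := right_nhdsWithin_Ioo_neBot hax
  have hnear : ∀ᶠ y in 𝓝[Ioo a x] x, y ∈ Ioi (x - ε) :=
    nhdsWithin_le_nhds (Ioi_mem_nhds (sub_lt_self x hε))
  obtain ⟨y, ⟨hy, hay, hyx⟩, hyε⟩ := ((hD.and eventually_mem_nhdsWithin).and hnear).exists
  refine ⟨x - y, ⟨sub_pos.2 hyx, by linarith [mem_Ioi.1 hyε]⟩, by simpa using hay, ?_⟩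
  rw [sub_sub_cancel]
  rw [Real.norm_eq_abs, Real.norm_eq_abs, smul_eq_mul, one_mul,
    _root_.abs_of_neg (sub_neg.2 hyx)] at hy
  nlinarith [(abs_le.1 hy).2, neg_abs_le (derivWithin f s x)]

theorem Continuous.exists_ramp {T : Type*} [TopologicalSpace T] {g : T → ℝ} (hg : Continuous g)
    {a b : ℝ} (hab : a < b) :
    ∃ χ : T → ℝ, Continuous χ ∧ (∀ t, χ t ∈ Icc 0 1) ∧ (∀ t, g t ≤ a → χ t = 0) ∧
      ∀ t, b ≤ g t → χ t = 1 := by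
  refine ⟨fun t => max 0 (min 1 ((g t - a) / (b - a))), by fun_prop,
    fun t => ⟨le_max_left _ _, max_le zero_le_one (min_le_left _ _)⟩, fun t ht => ?_,
    fun t ht => ?_⟩
  · exact max_eq_left (min_le_of_right_le
      (div_nonpos_of_nonpos_of_nonneg (sub_nonpos.2 ht) (sub_pos.2 hab).le))
  · have : 1 ≤ (g t - a) / (b - a) := by rw [le_div_iff₀ (sub_pos.2 hab)]; linarith
    simp [min_eq_left this]

section Deformation

variable {X : Type*} [NormedAddCommGroup X] [NormedSpace ℝ X]

theorem ContinuousLinearMap.exists_norm_le_one_lt_apply (f : X →L[ℝ] ℝ) {r : ℝ} (hr : r < ‖f‖) :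
    ∃ w : X, ‖w‖ ≤ 1 ∧ r < f w := by
  obtain ⟨x, hx, hrx⟩ := f.exists_lt_apply_of_lt_opNorm hr
  rcases lt_abs.mp hrx with h | h
  · exact ⟨x, hx.le, h⟩
  · exact ⟨-x, by simpa using hx.le, by simpa using h⟩

theorem le_sub_mul_of_le_fderiv_apply {I : X → ℝ} (hI : Differentiable ℝ I) {x v : X} {s β : ℝ}
    (hs : 0 ≤ s) (hder : ∀ τ ∈ Icc 0 s, β ≤ fderiv ℝ I (x - τ • v) v) :
    I (x - s • v) ≤ I x - s * β := by
  have hline : ∀ τ : ℝ, HasDerivAt (fun τ : ℝ => I (x - τ • v)) (-fderiv ℝ I (x - τ • v) v) τ :=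
    fun τ => by
      have hseg : HasDerivAt (fun τ : ℝ => x - τ • v) (-v) τ := by
        simpa using ((hasDerivAt_id τ).smul_const v).const_sub x
      have h := (hI _).hasFDerivAt.comp_hasDerivAt τ hseg
      rw [map_neg] at h
      exact h
  have := (convex_Icc 0 s).image_sub_le_mul_sub_of_deriv_le
    (fun τ _ => (hline τ).continuousAt.continuousWithinAt)
    (fun τ _ => (hline τ).differentiableAt.differentiableWithinAt)
    (fun τ hτ => (hline τ).deriv ▸ neg_le_neg (hder τ (interior_subset hτ)))
    0 (left_mem_Icc.2 hs) s (right_mem_Icc.2 hs) hs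
  simp only [zero_smul, sub_zero] at this
  linarith

variable {I : X → ℝ} {S : Set X} {β : ℝ}

theorem exists_uniform_descent_direction (hI : Continuous (fderiv ℝ I)) (hS : IsCompact S)
    (hβ : ∀ x ∈ S, β < ‖fderiv ℝ I x‖) :
    ∃ ρ > 0, ∀ x ∈ S, ∃ w : X, ‖w‖ ≤ 1 ∧ ∀ y ∈ Metric.ball x ρ, β < fderiv ℝ I y w := by
  choose! w hw hβw using fun x hx => (fderiv ℝ I x).exists_norm_le_one_lt_apply (hβ x hx)
  obtain ⟨ρ, hρ, hcover⟩ := lebesgue_number_lemma_of_metric hS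
    (c := fun x : S => {y | β < fderiv ℝ I y (w x)})
    (fun x => isOpen_lt continuous_const (hI.clm_apply continuous_const))
    (fun x hx => mem_iUnion.2 ⟨⟨x, hx⟩, hβw x hx⟩)
  refine ⟨ρ, hρ, fun x hx => ?_⟩
  obtain ⟨x', hx'⟩ := hcover x hx
  exact ⟨w x', hw x' x'.2, fun y hy => hx' hy⟩

theorem exists_pseudoGradient (hI : Continuous (fderiv ℝ I)) (hS : IsCompact S)
    (hβ : ∀ x ∈ S, β < ‖fderiv ℝ I x‖) :
    ∃ V : X → X, Continuous V ∧ ∃ ρ > 0, ∀ z ∈ S,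
      ‖V z‖ ≤ 1 ∧ ∀ y, ‖y - z‖ ≤ ρ → β ≤ fderiv ℝ I y (V z) := by
  obtain ⟨ρ, hρ, hdir⟩ := exists_uniform_descent_direction hI hS hβ
  choose! w hw hβw using hdir
  obtain ⟨f, hf⟩ := PartitionOfUnity.exists_isSubordinate hS.isClosed
    (fun x : S => Metric.ball (x : X) (ρ / 2)) (fun _ => Metric.isOpen_ball)
    (fun x hx => mem_iUnion.2 ⟨⟨x, hx⟩, Metric.mem_ball_self (half_pos hρ)⟩)
  refine ⟨fun z => ∑ᶠ i, f i z • w i, f.continuous_finsum_smul fun _ _ _ => continuousAt_const,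
    ρ / 2, half_pos hρ, fun z hz => ?_⟩
  have hV : ∀ y, ‖y - z‖ ≤ ρ / 2 →
      ∑ᶠ i, f i z • w i ∈ Metric.closedBall 0 1 ∩ {v | β ≤ fderiv ℝ I y v} := fun y hy =>
    ((convex_closedBall 0 1).inter (convex_halfSpace_ge (fderiv ℝ I y).isLinear β)).finsum_mem
      (fun i => f.nonneg i z) (f.sum_eq_one hz) fun i hi => by
        have hzi : dist z i < ρ / 2 := hf i (subset_tsupport _ hi)
        have hyi : y ∈ Metric.ball (i : X) ρ := by
          rw [Metric.mem_ball]
          linarith [dist_triangle y z i, dist_eq_norm y z]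
        exact ⟨mem_closedBall_zero_iff.2 (hw i i.2), (hβw i i.2 y hyi).le⟩
  exact ⟨mem_closedBall_zero_iff.1 (hV z (by simpa using (half_pos hρ).le)).1,
    fun y hy => (hV y hy).2⟩

theorem exists_path_deformation {T : Type*} [TopologicalSpace T] [CompactSpace T]
    (hI : ContDiff ℝ 1 I) (γ : C(T, X)) {d θ : ℝ} (hθ : 0 < θ) (hβ : 0 ≤ β)
    (hγ : ∀ t, d - θ ≤ I (γ t) → β < ‖fderiv ℝ I (γ t)‖) :
    ∃ s₀ > 0, ∀ s ∈ Icc 0 s₀, ∃ η : C(T, X), dist η γ ≤ s ∧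
      (∀ t, I (γ t) ≤ d - θ → η t = γ t) ∧
      ∀ t, I (η t) ≤ I (γ t) ∧ (d - θ / 2 ≤ I (γ t) → I (η t) ≤ I (γ t) - s * β) := by
  have hγI : Continuous fun t => I (γ t) := hI.continuous.comp γ.continuous
  obtain ⟨V, hVc, ρ, hρ, hV⟩ := exists_pseudoGradient (hI.continuous_fderiv one_ne_zero)
    ((isClosed_le continuous_const hγI).isCompact.image γ.continuous) fun _ ⟨t, ht, hx⟩ =>
      hx ▸ hγ t ht
  obtain ⟨χ, hχc, hχ01, hχ_eq_zero, hχ_eq_one⟩ :=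
    hγI.exists_ramp (show d - θ < d - θ / 2 by linarith)
  have hχ0 : ∀ t, 0 ≤ χ t := fun t => (hχ01 t).1
  set v : T → X := fun t => χ t • V (γ t)
  have hv : ∀ t, ‖v t‖ ≤ 1 ∧ ∀ y, ‖y - γ t‖ ≤ ρ → χ t * β ≤ fderiv ℝ I y (v t) := by
    intro t
    by_cases ht : d - θ < I (γ t)
    · obtain ⟨hV1, hVβ⟩ := hV (γ t) ⟨t, ht.le, rfl⟩
      refine ⟨?_, fun y hy => ?_⟩
      · rw [norm_smul, Real.norm_of_nonneg (hχ0 t)]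
        exact mul_le_one₀ (hχ01 t).2 (norm_nonneg _) hV1
      · rw [map_smul, smul_eq_mul]
        exact mul_le_mul_of_nonneg_left (hVβ y hy) (hχ0 t)
    · simp [v, hχ_eq_zero t (not_lt.1 ht)]
  refine ⟨ρ, hρ, fun s ⟨hs0, hsρ⟩ => ⟨⟨fun t => γ t - s • v t, by fun_prop⟩, ?_, ?_, fun t => ?_⟩⟩
  · refine (ContinuousMap.dist_le hs0).2 fun t => ?_
    rw [dist_eq_norm]
    simpa [norm_smul, abs_of_nonneg hs0] using mul_le_of_le_one_right hs0 (hv t).1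
  · intro t ht
    simp [v, hχ_eq_zero t ht]
  · have hdec : I (γ t - s • v t) ≤ I (γ t) - s * (χ t * β) :=
      le_sub_mul_of_le_fderiv_apply (hI.differentiable one_ne_zero) hs0 fun τ ⟨hτ0, hτs⟩ =>
        (hv t).2 _ (by
          simpa [norm_smul, abs_of_nonneg hτ0] using
            (mul_le_of_le_one_right hτ0 (hv t).1).trans (hτs.trans hsρ))
    refine ⟨hdec.trans (sub_le_self _ (mul_nonneg hs0 (mul_nonneg (hχ0 t) hβ))), fun ht => ?_⟩
    simpa [hχ_eq_one t ht] using hdec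

end Deformation

section PathSpace

variable {X T : Type*} [TopologicalSpace X] [TopologicalSpace T] {I : X → ℝ}

theorem Continuous.le_ciSup_of_compactSpace [CompactSpace T] {f : T → ℝ} (hf : Continuous f)
    (t : T) : f t ≤ ⨆ s, f s :=
  le_ciSup (isCompact_range hf).bddAbove t

theorem lowerSemicontinuous_iSup_comp [CompactSpace T] (hI : Continuous I) :
    LowerSemicontinuous fun σ : C(T, X) => ⨆ t, I (σ t) :=
  lowerSemicontinuous_ciSup (fun σ => (isCompact_range (hI.comp σ.continuous)).bddAbove)
    fun t => (hI.comp (continuous_eval_const t)).lowerSemicontinuous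

def admissiblePaths (I : X → ℝ) (γ₀ : C(T, X)) (Z : Set T) : Set C(T, X) :=
  {σ | (∀ t ∈ Z, σ t = γ₀ t) ∧ ∀ t, I (σ t) ≤ I (γ₀ t)}

theorem isClosed_admissiblePaths [T2Space X] (hI : Continuous I) (γ₀ : C(T, X)) (Z : Set T) :
    IsClosed (admissiblePaths I γ₀ Z) := by
  simp only [admissiblePaths, ofPred_and, ofPred_forall]
  exact (isClosed_biInter fun t _ => isClosed_eq (continuous_eval_const t) continuous_const).inter
    (isClosed_iInter fun t => isClosed_le (hI.comp (continuous_eval_const t)) continuous_const)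

end PathSpace

section MountainPass

variable {X : Type*} [NormedAddCommGroup X] [NormedSpace ℝ X] {I : X → ℝ}
  {T : Type*} [TopologicalSpace T] [CompactSpace T]

theorem exists_almostCritical_of_forall_iSup_le [Nonempty T] (hI : ContDiff ℝ 1 I)
    {γ₀ γ : C(T, X)} {Z : Set T} {c κ θ α : ℝ} (hκ : 0 < κ) (hθ : 0 < θ) (hκα : κ < α)
    (hZ : ∀ t ∈ Z, I (γ₀ t) ≤ c - θ) (hγ : γ ∈ admissiblePaths I γ₀ Z) (hcγ : c ≤ ⨆ t, I (γ t))
    (hmin : ∀ σ ∈ admissiblePaths I γ₀ Z, ⨆ t, I (γ t) ≤ (⨆ t, I (σ t)) + κ * dist σ γ) :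
    ∃ t, c - θ ≤ I (γ t) ∧ ‖fderiv ℝ I (γ t)‖ ≤ α := by
  -- otherwise a short pseudo-gradient deformation lowers the maximum at rate `α > κ`
  by_contra! hregular
  obtain ⟨s₀, hs₀, hdeform⟩ := exists_path_deformation hI γ hθ (hκ.trans hκα).le hregular
  set s := min s₀ (θ / (4 * κ))
  have hs : 0 < s := lt_min hs₀ (by positivity)
  have hκs : κ * s ≤ θ / 4 := by
    have : s ≤ θ / (4 * κ) := min_le_right _ _
    rw [le_div_iff₀ (by positivity)] at this
    linarith
  obtain ⟨η, hηγ, hηZ, hηI⟩ := hdeform s ⟨hs.le, min_le_left _ _⟩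
  have hη : η ∈ admissiblePaths I γ₀ Z :=
    ⟨fun t ht => (hηZ t ((hγ.1 t ht).symm ▸ hZ t ht)).trans (hγ.1 t ht),
      fun t => (hηI t).1.trans (hγ.2 t)⟩
  have hmaxη : ⨆ t, I (η t) ≤ max (c - θ / 2) ((⨆ t, I (γ t)) - s * α) := by
    refine ciSup_le fun t => ?_
    rcases le_or_gt (c - θ / 2) (I (γ t)) with ht | ht
    · exact le_max_of_le_right (((hηI t).2 ht).trans
        (sub_le_sub_right ((hI.continuous.comp γ.continuous).le_ciSup_of_compactSpace t) _))
    · exact le_max_of_le_left ((hηI t).1.trans ht.le)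
  have hγη := hmin η hη
  have hκη : κ * dist η γ ≤ κ * s := mul_le_mul_of_nonneg_left hηγ hκ.le
  rcases le_max_iff.1 hmaxη with h | h
  · linarith
  · nlinarith

theorem exists_almostCritical_near_path [CompleteSpace X] [Nonempty T] (hI : ContDiff ℝ 1 I)
    (γ₀ : C(T, X)) (Z : Set T) {c κ θ α : ℝ} (hκ : 0 < κ) (hθ : 0 < θ) (hκα : κ < α)
    (hZ : ∀ t ∈ Z, I (γ₀ t) ≤ c - θ) (hγ₀ : ∀ t, I (γ₀ t) ≤ c + κ)
    (hc : ∀ σ ∈ admissiblePaths I γ₀ Z, c ≤ ⨆ t, I (σ t)) :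
    ∃ t u, ‖u - γ₀ t‖ ≤ 1 ∧ c - θ ≤ I u ∧ I u ≤ I (γ₀ t) ∧ ‖fderiv ℝ I u‖ ≤ α := by
  set P := admissiblePaths I γ₀ Z
  have : CompleteSpace P := (isClosed_admissiblePaths hI.continuous γ₀ Z).completeSpace_coe
  set p₀ : P := ⟨γ₀, fun _ _ => rfl, fun _ => le_rfl⟩
  obtain ⟨γ, hγγ₀, hγ⟩ := ((lowerSemicontinuous_iSup_comp hI.continuous).comp
    continuous_subtype_val).exists_ekeland (F := fun σ : P => ⨆ t, I ((σ : C(T, X)) t))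
    ⟨c, by rintro _ ⟨σ, rfl⟩; exact hc σ σ.2⟩ hκ p₀
  have hdist : dist (γ : C(T, X)) γ₀ ≤ 1 := by
    have hγ₀max : ⨆ t, I (γ₀ t) ≤ c + κ := ciSup_le hγ₀
    change dist (γ : C(T, X)) p₀ ≤ 1
    rw [← Subtype.dist_eq]
    nlinarith [hc γ γ.2, dist_nonneg (x := γ) (y := p₀)]
  obtain ⟨t, hct, ht⟩ := exists_almostCritical_of_forall_iSup_le hI hκ hθ hκα hZ γ.2 (hc γ γ.2)
    fun σ hσ => Subtype.dist_eq (⟨σ, hσ⟩ : P) γ ▸ hγ ⟨σ, hσ⟩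
  exact ⟨t, γ.1 t, by rw [← dist_eq_norm]; exact (ContinuousMap.dist_apply_le_dist t).trans hdist,
    hct, γ.2.2 t, ht⟩

end MountainPass

section MonotonicityTrick

variable {X : Type*} [NormedAddCommGroup X] [NormedSpace ℝ X]

theorem mpLevel_le_iSup {I : X → ℝ} (hI : Continuous I) (hI0 : I 0 = 0) {σ : C(unitInterval, X)}
    (h0 : σ 0 = 0) (h1 : I (σ 1) < 0) : mpLevel I ≤ ⨆ t, I (σ t) := by
  refine csInf_le ⟨0, ?_⟩ ⟨σ, ⟨h0, h1⟩, rfl⟩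
  rintro _ ⟨γ, ⟨hγ0, -⟩, rfl⟩
  simpa [hγ0, hI0] using (hI.comp γ.continuous).le_ciSup_of_compactSpace 0

theorem exists_iSup_lt_of_mpLevel_lt {I : X → ℝ}
    (hΓ : {γ : C(unitInterval, X) | γ 0 = 0 ∧ I (γ 1) < 0}.Nonempty) {r : ℝ}
    (hr : mpLevel I < r) : ∃ γ : C(unitInterval, X), γ 0 = 0 ∧ I (γ 1) < 0 ∧ ⨆ t, I (γ t) < r := by
  obtain ⟨_, ⟨γ, hγ, rfl⟩, hγr⟩ := exists_lt_of_csInf_lt (hΓ.image _) hr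
  exact ⟨γ, hγ.1, hγ.2, hγr⟩

omit [NormedSpace ℝ X] in
theorem exists_norm_le_of_tendsto_comap_norm {f : X → ℝ}
    (hf : Tendsto f (comap norm atTop) atTop) (r : ℝ) : ∃ K, ∀ u, f u ≤ r → ‖u‖ ≤ K := by
  obtain ⟨K, hK⟩ := eventually_atTop.1 (eventually_comap.1 (hf.eventually_gt_atTop r))
  exact ⟨K, fun u hu => not_lt.1 fun h => hu.not_gt (hK _ h.le u rfl)⟩

omit [NormedSpace ℝ X] in
theorem exists_norm_le_of_tendsto_or_tendsto {A B : X → ℝ}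
    (h : Tendsto A (comap norm atTop) atTop ∨ Tendsto B (comap norm atTop) atTop) (r₁ r₂ : ℝ) :
    ∃ K, ∀ u, A u ≤ r₁ → B u ≤ r₂ → ‖u‖ ≤ K := by
  rcases h with h | h
  · obtain ⟨K, hK⟩ := exists_norm_le_of_tendsto_comap_norm h r₁
    exact ⟨K, fun u hu _ => hK u hu⟩
  · obtain ⟨K, hK⟩ := exists_norm_le_of_tendsto_comap_norm h r₂
    exact ⟨K, fun u _ hu => hK u hu⟩

theorem exists_almostCritical_of_mpLevel_sub_le [CompleteSpace X] {A B : X → ℝ}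
    (hA : ContDiff ℝ 1 A) (hB : ContDiff ℝ 1 B) (hA0 : A 0 = 0) (hB0 : B 0 = 0)
    (hBnonneg : ∀ u, 0 ≤ B u) {lam δ L α : ℝ} (hδ : 0 < δ) (hδ1 : δ ≤ 1) (hL : 0 ≤ L)
    (hα : (L + 1) * δ < α) (hc : 0 < mpLevel fun v => A v - lam * B v)
    (hΓ : {γ : C(unitInterval, X) | γ 0 = 0 ∧ A (γ 1) - (lam - δ) * B (γ 1) < 0}.Nonempty)
    (hcδ : mpLevel (fun v => A v - (lam - δ) * B v) ≤ (mpLevel fun v => A v - lam * B v) + L * δ) :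
    ∃ x u, B x ≤ L + 2 ∧ A x ≤ (mpLevel fun v => A v - lam * B v) + (L + 2) + |lam| * (L + 2) ∧
      ‖u - x‖ ≤ 1 ∧ |A u - lam * B u - mpLevel fun v => A v - lam * B v| ≤ α ∧
      ‖fderiv ℝ (fun v => A v - lam * B v) u‖ ≤ α := by
  set I : X → ℝ := fun v => A v - lam * B v
  set c := mpLevel I
  have hI : ContDiff ℝ 1 I := hA.sub (contDiff_const.mul hB)
  have hI0 : I 0 = 0 := by simp [I, hA0, hB0]
  have hIμ : ∀ u, A u - (lam - δ) * B u = I u + δ * B u := fun u => by simp only [I]; ring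
  have hIle : ∀ u, I u ≤ A u - (lam - δ) * B u := fun u => by
    rw [hIμ]; nlinarith [hBnonneg u]
  obtain ⟨γ₀, hγ₀0, hγ₀1, hγ₀max⟩ := exists_iSup_lt_of_mpLevel_lt
    (I := fun v => A v - (lam - δ) * B v) hΓ (lt_add_of_pos_right _ hδ)
  have hγ₀ : ∀ t, A (γ₀ t) - (lam - δ) * B (γ₀ t) ≤ c + (L + 1) * δ := fun t => by
    have hcont : Continuous fun t => A (γ₀ t) - (lam - δ) * B (γ₀ t) :=
      (hA.continuous.sub (continuous_const.mul hB.continuous)).comp γ₀.continuous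
    linarith [hcont.le_ciSup_of_compactSpace t]
  have hθ : 0 < min δ (min c α) := lt_min hδ (lt_min hc (by nlinarith))
  obtain ⟨t, u, hut, hθu, huγ, hu⟩ := exists_almostCritical_near_path hI γ₀ {0, 1}
    (c := c) (by positivity) hθ hα
    (by
      rintro t (rfl | rfl)
      · rw [hγ₀0, hI0]; linarith [min_le_right δ (min c α), min_le_left c α]
      · linarith [hIle (γ₀ 1), min_le_right δ (min c α), min_le_left c α])
    (fun t => (hIle _).trans (hγ₀ t))
    (fun σ hσ => mpLevel_le_iSup hI.continuous hI0 (by rw [hσ.1 0 (by simp), hγ₀0])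
      (by rw [hσ.1 1 (by simp)]; linarith [hIle (γ₀ 1)]))
  have hBx : B (γ₀ t) ≤ L + 2 := by
    have h := hγ₀ t
    rw [hIμ] at h
    refine le_of_mul_le_mul_left ?_ hδ
    linarith [min_le_left δ (min c α)]
  have hAx : A (γ₀ t) ≤ c + (L + 2) + |lam| * (L + 2) := by
    have hA_eq : A (γ₀ t) = I (γ₀ t) + lam * B (γ₀ t) := by simp only [I]; ring
    have hlamB : lam * B (γ₀ t) ≤ |lam| * (L + 2) :=
      (le_abs_self _).trans (by rw [abs_mul, abs_of_nonneg (hBnonneg _)]; gcongr)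
    nlinarith [hIle (γ₀ t), hγ₀ t]
  refine ⟨γ₀ t, u, hBx, hAx, hut, abs_le.2 ⟨?_, ?_⟩, hu⟩
  · linarith [min_le_right δ (min c α), min_le_right c α]
  · linarith [hIle (γ₀ t), hγ₀ t]

end MonotonicityTrick

theorem statement7_general {X : Type*} [NormedAddCommGroup X] [NormedSpace ℝ X] [CompleteSpace X]
    (a b : ℝ)
    (A B : X → ℝ) (hA : ContDiff ℝ 1 A) (hB : ContDiff ℝ 1 B)
    (hA0 : A 0 = 0) (hB0 : B 0 = 0) (hBnonneg : ∀ u, 0 ≤ B u)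
    (hcoercive :
      Tendsto A (comap (fun u : X => ‖u‖) atTop) atTop ∨
      Tendsto B (comap (fun u : X => ‖u‖) atTop) atTop)
    (hMPgeom : ∀ lam ∈ Set.Icc a b,
      ({γ : C(unitInterval, X) | γ (0 : unitInterval) = 0 ∧
          A (γ (1 : unitInterval)) - lam * B (γ (1 : unitInterval)) < 0}).Nonempty ∧
      0 < mpLevel (fun u => A u - lam * B u))
    -- a fixed λ ∈ 𝓘 which is not the left endpoint of 𝓘
    (lam : ℝ) (hlam : lam ∈ Set.Icc a b) (hlam' : a < lam)
    -- μ ↦ c_{mp,μ} is differentiable at λ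
    (hdiff : DifferentiableWithinAt ℝ
      (fun mu => mpLevel (fun u => A u - mu * B u)) (Set.Icc a b) lam) :
    ∃ u : ℕ → X,
      (∃ C : ℝ, ∀ n, ‖u n‖ ≤ C) ∧
      Tendsto (fun n => A (u n) - lam * B (u n)) atTop
        (𝓝 (mpLevel (fun v => A v - lam * B v))) ∧
      Tendsto (fun n => ‖fderiv ℝ (fun v => A v - lam * B v) (u n)‖) atTop (𝓝 0) := by
  set c := mpLevel fun v => A v - lam * B v
  obtain ⟨L, hL, hslope⟩ := hdiff.exists_le_add_mul_of_left
    (fun μ hμ => ⟨hμ.1.le, hμ.2.le.trans hlam.2⟩) hlam'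
  obtain ⟨K, hK⟩ :=
    exists_norm_le_of_tendsto_or_tendsto hcoercive (c + (L + 2) + |lam| * (L + 2)) (L + 2)
  have almost_critical : ∀ α > 0, ∃ u, ‖u‖ ≤ K + 1 ∧ |A u - lam * B u - c| ≤ α ∧
      ‖fderiv ℝ (fun v => A v - lam * B v) u‖ ≤ α := fun α hα => by
    obtain ⟨δ, ⟨hδ, hδα⟩, haδ, hcδ⟩ := hslope (min 1 (α / (L + 2))) (by positivity)
    have hLδ : (L + 1) * δ < α := by
      have := hδα.trans_le (min_le_right _ _)
      rw [lt_div_iff₀ (by positivity)] at this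
      nlinarith
    obtain ⟨x, u, hBx, hAx, hux, hIu, hI'u⟩ := exists_almostCritical_of_mpLevel_sub_le hA hB hA0
      hB0 hBnonneg hδ (hδα.le.trans (min_le_left _ _)) hL hLδ (hMPgeom lam hlam).2
      (hMPgeom (lam - δ) ⟨haδ.le, by linarith [hlam.2]⟩).1 hcδ
    exact ⟨u, by linarith [norm_le_norm_add_norm_sub' u x, hK x hAx hBx], hIu, hI'u⟩
  choose u hu hIu hI'u using fun n : ℕ => almost_critical (1 / (n + 1)) Nat.one_div_pos_of_nat
  refine ⟨u, ⟨K + 1, hu⟩, ?_, ?_⟩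
  · refine tendsto_iff_dist_tendsto_zero.2 (squeeze_zero (fun _ => dist_nonneg) (fun n => ?_)
      tendsto_one_div_add_atTop_nhds_zero_nat)
    exact (Real.dist_eq _ _).trans_le (hIu n)
  · exact squeeze_zero (fun _ => norm_nonneg _) hI'u tendsto_one_div_add_atTop_nhds_zero_nat

theorem statement7 {X : Type*} [NormedAddCommGroup X] [NormedSpace ℝ X] [CompleteSpace X]
    (a b : ℝ) (ha : 0 < a) (hab : a ≤ b)
    (A B : X → ℝ) (hA : ContDiff ℝ 1 A) (hB : ContDiff ℝ 1 B)
    (hA0 : A 0 = 0) (hB0 : B 0 = 0) (hBnonneg : ∀ u, 0 ≤ B u)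
    (hcoercive :
      Tendsto A (comap (fun u : X => ‖u‖) atTop) atTop ∨
      Tendsto B (comap (fun u : X => ‖u‖) atTop) atTop)
    (hMPgeom : ∀ lam ∈ Set.Icc a b,
      ({γ : C(unitInterval, X) | γ (0 : unitInterval) = 0 ∧
          A (γ (1 : unitInterval)) - lam * B (γ (1 : unitInterval)) < 0}).Nonempty ∧
      0 < mpLevel (fun u => A u - lam * B u))
    -- a fixed λ ∈ 𝓘 which is not the left endpoint of 𝓘
    (lam : ℝ) (hlam : lam ∈ Set.Icc a b) (hlam' : a < lam)
    -- μ ↦ c_{mp,μ} is differentiable at λ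
    (hdiff : DifferentiableWithinAt ℝ
      (fun mu => mpLevel (fun u => A u - mu * B u)) (Set.Icc a b) lam) :
    ∃ u : ℕ → X,
      (∃ C : ℝ, ∀ n, ‖u n‖ ≤ C) ∧
      Tendsto (fun n => A (u n) - lam * B (u n)) atTop
        (𝓝 (mpLevel (fun v => A v - lam * B v))) ∧
      Tendsto (fun n => ‖fderiv ℝ (fun v => A v - lam * B v) (u n)‖) atTop (𝓝 0) :=
  statement7_general a b A B hA hB hA0 hB0 hBnonneg hcoercive hMPgeom lam hlam hlam' hdiff
end

section
/- Let f : ℝ → ℝ be continuous and odd and satisfy (f2), so that μ := −(1/2)·limsup_{t→0} f(t)/t is a finite positive real number. With f₁(t) := max{f(t)+2μt, 0} for t ≥ 0 and f₁(t) := min{f(t)+2μt, 0} for t < 0, and f₂ := f₁ − f, one has for every t ∈ ℝ: f₁(t)·t ≥ 0 and f₂(t)·t ≥ 2μt²; consequently F₁(t) := ∫₀ᵗ f₁(s) ds ≥ 0 and F₂(t) := ∫₀ᵗ f₂(s) ds ≥ μt² for all t ∈ ℝ. -/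
open Filter Topology Set MeasureTheory intervalIntegral

/-- `μ := -(1/2) · limsup_{t→0} f(t)/t`. -/
noncomputable def muBL (f : ℝ → ℝ) : ℝ :=
  -(1 / 2) * Filter.limsup (fun t => f t / t) (𝓝[≠] (0 : ℝ))

/-- `f₁(t) = max{f(t)+2μt, 0}` for `t ≥ 0` and `f₁(t) = min{f(t)+2μt, 0}` for `t < 0`. -/
noncomputable def fOne (f : ℝ → ℝ) (t : ℝ) : ℝ :=
  if 0 ≤ t then max (f t + 2 * muBL f * t) 0 else min (f t + 2 * muBL f * t) 0

/-- `f₂ := f₁ - f`. -/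
noncomputable def fTwo (f : ℝ → ℝ) (t : ℝ) : ℝ := fOne f t - f t

/-- `F₁(t) := ∫₀ᵗ f₁(s) ds`. -/
noncomputable def FOne (f : ℝ → ℝ) (t : ℝ) : ℝ := ∫ s in (0:ℝ)..t, fOne f s

/-- `F₂(t) := ∫₀ᵗ f₂(s) ds`. -/
noncomputable def FTwo (f : ℝ → ℝ) (t : ℝ) : ℝ := ∫ s in (0:ℝ)..t, fTwo f s

/-- Condition (f2): `-∞ < liminf_{t→0} f(t)/t ≤ limsup_{t→0} f(t)/t < 0`,
expressed via eventual bounds near `0`. -/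
def CondF2 (f : ℝ → ℝ) : Prop :=
  ∃ m M : ℝ, M < 0 ∧ (∀ᶠ t in 𝓝[≠] (0 : ℝ), m ≤ f t / t) ∧
    (∀ᶠ t in 𝓝[≠] (0 : ℝ), f t / t ≤ M)

/-- Condition (f3): `lim_{|t|→∞} f(t)/|t|^{(N+2)/(N-2)} = 0`. -/
def CondF3 (N : ℕ) (f : ℝ → ℝ) : Prop :=
  Tendsto (fun t : ℝ => f t / |t| ^ ((N + 2 : ℝ) / (N - 2)))
    (comap (fun t : ℝ => |t|) atTop) (𝓝 0)

lemma fOne_continuous (f : ℝ → ℝ) (hf : Continuous f) (hodd : ∀ t, f (-t) = - f t) :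
    Continuous (fOne f) := by
  have hg : Continuous fun t => f t + 2 * muBL f * t := by continuity
  have : fOne f = fun t => if (0:ℝ) ≤ t then max (f t + 2 * muBL f * t) 0
      else min (f t + 2 * muBL f * t) 0 := rfl
  rw [this]
  apply Continuous.if_le (hg.max continuous_const) (hg.min continuous_const)
    continuous_const continuous_id
  intro x hx
  have hx0 : x = 0 := hx.symm
  subst hx0
  have hf0 : f 0 = 0 := by
    have := hodd 0; simp at this; linarith
  simp [hf0]

theorem statement11 (f : ℝ → ℝ) (hf : Continuous f) (hodd : ∀ t, f (-t) = - f t)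
    (hf2 : CondF2 f) :
    0 < muBL f ∧ ∀ t : ℝ,
      0 ≤ fOne f t * t ∧ 2 * muBL f * t ^ 2 ≤ fTwo f t * t ∧
      0 ≤ FOne f t ∧ muBL f * t ^ 2 ≤ FTwo f t := by
  obtain ⟨m, M, hM, h1, h2⟩ := hf2
  have hls : Filter.limsup (fun t => f t / t) (𝓝[≠] (0:ℝ)) ≤ M := by
    refine limsup_le_of_le (IsBoundedUnder.isCoboundedUnder_le ⟨m, ?_⟩) h2
    simpa [eventually_map] using h1
  have hmu : 0 < muBL f := by
    have : Filter.limsup (fun t => f t / t) (𝓝[≠] (0:ℝ)) < 0 := hls.trans_lt hM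
    unfold muBL; nlinarith
  -- pointwise bounds on fOne
  have h1nonneg : ∀ t : ℝ, 0 ≤ t → 0 ≤ fOne f t := fun t ht => by
    simp [fOne, ht, le_max_right]
  have h1nonpos : ∀ t : ℝ, t ≤ 0 → fOne f t ≤ 0 := fun t ht => by
    rcases lt_or_eq_of_le ht with h | h
    · simp [fOne, not_le.mpr h, min_le_right]
    · subst h
      have hf0 : f 0 = 0 := by
        have := hodd 0; simp at this; linarith
      simp [fOne, hf0]
  have h2ge : ∀ t : ℝ, 0 ≤ t → 2 * muBL f * t ≤ fTwo f t := fun t ht => by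
    simp only [fTwo, fOne, ht, if_pos]
    have := le_max_left (f t + 2 * muBL f * t) 0
    linarith
  have h2le : ∀ t : ℝ, t ≤ 0 → fTwo f t ≤ 2 * muBL f * t := fun t ht => by
    rcases lt_or_eq_of_le ht with h | h
    · simp only [fTwo, fOne, not_le.mpr h, if_neg, not_false_iff]
      have := min_le_left (f t + 2 * muBL f * t) 0
      linarith
    · subst h
      have hf0 : f 0 = 0 := by
        have := hodd 0; simp at this; linarith
      simp [fTwo, fOne, hf0]
  have hc1 : Continuous (fOne f) := fOne_continuous f hf hodd
  have hc2 : Continuous (fTwo f) := hc1.sub hf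
  refine ⟨hmu, fun t => ?_⟩
  refine ⟨?_, ?_, ?_, ?_⟩
  · rcases le_or_gt 0 t with ht | ht
    · exact mul_nonneg (h1nonneg t ht) ht
    · have := h1nonpos t ht.le; nlinarith
  · rcases le_or_gt 0 t with ht | ht
    · have := h2ge t ht
      nlinarith
    · have := h2le t ht.le
      nlinarith
  · rcases le_or_gt 0 t with ht | ht
    · unfold FOne
      apply intervalIntegral.integral_nonneg ht
      intro x hx; exact h1nonneg x hx.1
    · unfold FOne
      rw [integral_symm t 0]
      have : (∫ s in t..(0:ℝ), fOne f s) ≤ ∫ s in t..(0:ℝ), (0:ℝ) :=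
        intervalIntegral.integral_mono_on ht.le
          ((fOne_continuous f hf hodd).intervalIntegrable t 0) intervalIntegrable_const
          (fun x hx => h1nonpos x hx.2)
      simp only [intervalIntegral.integral_const, smul_zero] at this
      linarith
  · have key : ∀ u : ℝ, (∫ s in (0:ℝ)..u, 2 * muBL f * s) = muBL f * u ^ 2 := fun u => by
      rw [intervalIntegral.integral_const_mul, integral_id]
      ring
    have hgi : ∀ a b : ℝ, IntervalIntegrable (fun s : ℝ => 2 * muBL f * s) volume a b :=
      fun a b => (by continuity : Continuous fun s : ℝ => 2 * muBL f * s).intervalIntegrable a b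
    rcases le_or_gt 0 t with ht | ht
    · calc muBL f * t ^ 2 = ∫ s in (0:ℝ)..t, 2 * muBL f * s := (key t).symm
        _ ≤ FTwo f t := intervalIntegral.integral_mono_on ht (hgi 0 t)
            (hc2.intervalIntegrable 0 t) (fun x hx => h2ge x hx.1)
    · have hle : (∫ s in t..(0:ℝ), fTwo f s) ≤ ∫ s in t..(0:ℝ), 2 * muBL f * s :=
        intervalIntegral.integral_mono_on ht.le (hc2.intervalIntegrable t 0)
          (hgi t 0) (fun x hx => h2le x hx.2)
      have h2 : (∫ s in t..(0:ℝ), 2 * muBL f * s) = -(muBL f * t ^ 2) := by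
        rw [integral_symm 0 t, key t]
      have h3 : (∫ s in t..(0:ℝ), fTwo f s) = -(FTwo f t) := integral_symm 0 t
      have : FTwo f t = -(∫ s in t..(0:ℝ), fTwo f s) := by linarith
      linarith
end

section
/- Let N ≥ 3 be an integer and f : ℝ → ℝ be continuous and odd and satisfy (f2) and (f3), and set μ := −(1/2)·limsup_{t→0} f(t)/t ∈ (0,∞). With f₁(t) := max{f(t)+2μt, 0} for t ≥ 0 and f₁(t) := min{f(t)+2μt, 0} for t < 0, and F₁(t) := ∫₀ᵗ f₁(s) ds, there exists a constant C_μ > 0 such that 0 ≤ F₁(t) ≤ (μ/2)·t² + C_μ·|t|^{2N/(N−2)} for all t ∈ ℝ. -/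
open Filter Topology Set MeasureTheory intervalIntegral

lemma fOne_cont (f : ℝ → ℝ) (hf : Continuous f) (hf0 : f 0 = 0) :
    Continuous (fOne f) := by
  have hg : Continuous (fun t => f t + 2 * muBL f * t) :=
    hf.add (continuous_const.mul continuous_id)
  have : fOne f = fun t =>
      if (0:ℝ) ≤ t then max (f t + 2 * muBL f * t) 0
      else min (f t + 2 * muBL f * t) 0 := rfl
  rw [this]
  exact Continuous.if_le (hg.max continuous_const) (hg.min continuous_const)
    continuous_const continuous_id (fun x hx => by simp [← hx, hf0])

lemma fOne_odd (f : ℝ → ℝ) (hodd : ∀ t, f (-t) = - f t) :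
    ∀ t, fOne f (-t) = - fOne f t := by
  have hf0 : f 0 = 0 := by have := hodd 0; simp at this; linarith
  have key : ∀ t : ℝ, 0 < t → fOne f (-t) = - fOne f t := by
    intro t ht
    simp only [fOne, if_pos ht.le, if_neg (not_le.mpr (neg_neg_iff_pos.mpr ht) :
      ¬ (0:ℝ) ≤ -t)]
    rw [hodd t, show - f t + 2 * muBL f * (-t) = -(f t + 2 * muBL f * t) by ring]
    rcases le_total (f t + 2 * muBL f * t) 0 with h | h
    · rw [max_eq_right h, min_eq_right (by linarith : (0:ℝ) ≤ -(f t + 2 * muBL f * t))]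
      simp
    · rw [max_eq_left h, min_eq_left (by linarith : -(f t + 2 * muBL f * t) ≤ 0)]
  intro t
  rcases lt_trichotomy t 0 with h | h | h
  · have := key (-t) (by linarith)
    rw [neg_neg] at this
    rw [this]; ring
  · simp [h, fOne, hf0]
  · exact key t h

lemma FOne_even (f : ℝ → ℝ) (hodd : ∀ t, f (-t) = - f t) :
    ∀ t, FOne f (-t) = FOne f t := by
  intro t
  have h1 : ∫ s in (0:ℝ)..t, fOne f (-s) = ∫ s in (-t)..(0:ℝ), fOne f s := by
    simpa using intervalIntegral.integral_comp_neg (a := 0) (b := t) (fOne f)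
  have h2 : ∫ s in (0:ℝ)..t, fOne f (-s) = - FOne f t := by
    rw [show (fun s => fOne f (-s)) = fun s => - fOne f s from funext (fOne_odd f hodd)]
    exact intervalIntegral.integral_neg
  have h3 : ∫ s in (-t)..(0:ℝ), fOne f s = - FOne f (-t) := by
    rw [FOne, intervalIntegral.integral_symm]
  rw [h2, h3] at h1
  linarith

theorem statement12 (N : ℕ) (hN : 3 ≤ N) (f : ℝ → ℝ) (hf : Continuous f)
    (hodd : ∀ t, f (-t) = - f t) (hf2 : CondF2 f) (hf3 : CondF3 N f) :
    ∃ Cμ : ℝ, 0 < Cμ ∧ ∀ t : ℝ,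
      0 ≤ FOne f t ∧
      FOne f t ≤ muBL f / 2 * t ^ 2 + Cμ * |t| ^ ((2 * N : ℝ) / (N - 2)) := by
  obtain ⟨m, M, hM0, hm, hM⟩ := hf2
  have hf0 : f 0 = 0 := by have := hodd 0; simp at this; linarith
  set μ := muBL f with hμdef
  set L := Filter.limsup (fun t : ℝ => f t / t) (𝓝[≠] (0:ℝ)) with hL
  have hμL : μ = -(1/2) * L := rfl
  have hbdd : IsBoundedUnder (· ≤ ·) (𝓝[≠] (0:ℝ)) (fun t => f t / t) :=
    ⟨M, by simpa [eventually_map] using hM⟩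
  have hcob : IsCoboundedUnder (· ≤ ·) (𝓝[≠] (0:ℝ)) (fun t => f t / t) :=
    Filter.IsBoundedUnder.isCoboundedUnder_le ⟨m, by simpa [eventually_map] using hm⟩
  have hLM : L ≤ M := Filter.limsup_le_of_le hcob hM
  have hμpos : 0 < μ := by rw [hμL]; nlinarith
  -- cast facts
  have hNR : (3:ℝ) ≤ (N:ℝ) := by exact_mod_cast hN
  set p : ℝ := ((N:ℝ) + 2) / ((N:ℝ) - 2) with hp
  have hN2 : (0:ℝ) < (N:ℝ) - 2 := by linarith
  have hp1 : 1 ≤ p := (one_le_div hN2).mpr (by linarith)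
  have hppos : 0 < p := lt_of_lt_of_le one_pos hp1
  have hexp : (2 * (N:ℝ)) / ((N:ℝ) - 2) = p + 1 := by
    rw [hp]; field_simp; ring
  -- eventual bound near zero
  have hev : ∀ᶠ t in 𝓝[≠] (0:ℝ), f t / t < -μ :=
    Filter.eventually_lt_of_limsup_lt (by rw [← hL, hμL] at *; nlinarith) hbdd
  rw [eventually_nhdsWithin_iff, Metric.eventually_nhds_iff] at hev
  obtain ⟨δ, hδ, hδ'⟩ := hev
  -- bound for large |t| from (f3)
  have h3 := hf3
  unfold CondF3 at h3
  rw [Metric.tendsto_nhds] at h3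
  have h3' := h3 1 one_pos
  rw [Filter.eventually_comap, Filter.eventually_atTop] at h3'
  obtain ⟨R, hR⟩ := h3'
  set T : ℝ := max R 1 with hT
  have hT1 : (1:ℝ) ≤ T := le_max_right _ _
  have hlarge : ∀ t : ℝ, T ≤ t → |f t| ≤ t ^ p := by
    intro t ht
    have ht1 : (1:ℝ) ≤ t := le_trans hT1 ht
    have htpos : 0 < t := lt_of_lt_of_le one_pos ht1
    have habs : |t| = t := abs_of_pos htpos
    have h := hR |t| (by rw [habs]; exact le_trans (le_max_left _ _) ht) t rfl
    rw [Real.dist_eq, sub_zero, habs] at h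
    have hpow : 0 < t ^ p := Real.rpow_pos_of_pos htpos p
    have := (abs_div (f t) (t ^ p)) ▸ h
    rw [abs_div, abs_of_pos hpow, div_lt_one hpow] at h
    exact le_of_lt h
  -- bound on compact part
  obtain ⟨x₀, _, hKmax⟩ := (isCompact_Icc (a := (0:ℝ)) (b := T)).exists_isMaxOn
    (nonempty_Icc.mpr (by linarith)) ((continuous_abs.comp hf).continuousOn)
  set K : ℝ := |f x₀| with hKdef
  have hK : ∀ y ∈ Icc (0:ℝ) T, |f y| ≤ K := fun y hy => hKmax hy
  have hK0 : 0 ≤ K := abs_nonneg _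
  -- the constant
  set C : ℝ := max (1 + 2*μ) ((K + 2*μ*T) / δ ^ p) with hC
  have hCpos : 0 < C := lt_of_lt_of_le (by linarith) (le_max_left _ _)
  -- pointwise bound for nonnegative arguments
  have hptw : ∀ s : ℝ, 0 ≤ s → fOne f s ≤ μ * s + C * s ^ p := by
    intro s hs
    rcases eq_or_lt_of_le hs with h0 | hspos
    · rw [← h0]
      simp [fOne, hf0, Real.zero_rpow (ne_of_gt hppos)]
    have hsp : 0 ≤ s ^ p := Real.rpow_nonneg hs p
    have hCs : 0 ≤ C * s ^ p := mul_nonneg hCpos.le hsp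
    have hμs : 0 ≤ μ * s := mul_nonneg hμpos.le hs
    have hfone : fOne f s = max (f s + 2*μ*s) 0 := by rw [fOne, if_pos hs]
    rcases lt_or_ge s δ with hsδ | hsδ
    · -- small s
      have hfs : f s / s < -μ := hδ' (by rw [Real.dist_eq, sub_zero, abs_of_pos hspos]; exact hsδ)
        (by simpa using ne_of_gt hspos)
      have hlt : f s < -μ * s := by
        have := (div_lt_iff₀ hspos).mp hfs
        linarith
      have h1 : f s + 2*μ*s ≤ μ * s := by linarith
      have h2 : max (f s + 2*μ*s) 0 ≤ μ * s := max_le h1 hμs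
      rw [hfone]; linarith
    · -- s ≥ δ
      have hδp : 0 < δ ^ p := Real.rpow_pos_of_pos hδ p
      have hsge : δ ^ p ≤ s ^ p := Real.rpow_le_rpow hδ.le hsδ hppos.le
      rcases le_or_gt s T with hsT | hsT
      · -- middle range
        have hKT : 0 ≤ K + 2*μ*T := by
          have : 0 ≤ 2*μ*T := by positivity
          linarith
        have hfb : |f s| ≤ K := hK s ⟨hs, hsT⟩
        have h1 : f s + 2*μ*s ≤ K + 2*μ*T := by
          have ha := (abs_le.mp hfb).2
          have hb : 2*μ*s ≤ 2*μ*T := by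
            have := mul_le_mul_of_nonneg_left hsT (by positivity : (0:ℝ) ≤ 2*μ)
            linarith
          linarith
        have h2 : fOne f s ≤ K + 2*μ*T := by
          rw [hfone]; exact max_le h1 hKT
        have h3 : K + 2*μ*T ≤ ((K + 2*μ*T) / δ ^ p) * s ^ p := by
          calc K + 2*μ*T = ((K + 2*μ*T) / δ ^ p) * δ ^ p := by field_simp
          _ ≤ ((K + 2*μ*T) / δ ^ p) * s ^ p :=
              mul_le_mul_of_nonneg_left hsge (div_nonneg hKT hδp.le)
        have h4 : ((K + 2*μ*T) / δ ^ p) * s ^ p ≤ C * s ^ p :=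
          mul_le_mul_of_nonneg_right (le_max_right _ _) hsp
        linarith
      · -- large range
        have h1 : |f s| ≤ s ^ p := hlarge s hsT.le
        have hs1 : (1:ℝ) ≤ s := le_trans hT1 hsT.le
        have hssp : s ≤ s ^ p := by
          calc s = s ^ (1:ℝ) := (Real.rpow_one s).symm
          _ ≤ s ^ p := Real.rpow_le_rpow_of_exponent_le hs1 hp1
        have h2 : f s + 2*μ*s ≤ (1 + 2*μ) * s ^ p := by
          have ha := (abs_le.mp h1).2
          have hb : 2*μ*s ≤ 2*μ*(s^p) := by
            have := mul_le_mul_of_nonneg_left hssp (by positivity : (0:ℝ) ≤ 2*μ)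
            linarith
          nlinarith [hb, ha]
        have h3 : fOne f s ≤ (1 + 2*μ) * s ^ p := by
          rw [hfone]
          refine max_le h2 ?_
          have : 0 ≤ (1 + 2*μ) * s ^ p := by positivity
          linarith
        have h4 : (1 + 2*μ) * s ^ p ≤ C * s ^ p :=
          mul_le_mul_of_nonneg_right (le_max_left _ _) hsp
        linarith
  -- integrability / nonnegativity helpers
  have hcont : Continuous (fOne f) := fOne_cont f hf hf0
  have hfone_nonneg : ∀ s : ℝ, 0 ≤ s → 0 ≤ fOne f s := by
    intro s hs; rw [fOne, if_pos hs]; exact le_max_right _ _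
  -- main bound for positive t
  have main : ∀ t : ℝ, 0 ≤ t →
      0 ≤ FOne f t ∧ FOne f t ≤ μ / 2 * t ^ 2 + C * t ^ ((2 * (N:ℝ)) / ((N:ℝ) - 2)) := by
    intro t ht
    have hnn : 0 ≤ FOne f t :=
      intervalIntegral.integral_nonneg ht (fun s hs => hfone_nonneg s hs.1)
    refine ⟨hnn, ?_⟩
    rcases eq_or_lt_of_le ht with h0 | htpos
    · rw [← h0]
      simp [FOne, Real.zero_rpow (by rw [hexp]; positivity : (2*(N:ℝ))/((N:ℝ)-2) ≠ 0)]
    have i1 : IntervalIntegrable (fun s : ℝ => μ * s) volume 0 t :=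
      (continuous_const.mul continuous_id').intervalIntegrable _ _
    have hb1 : FOne f t ≤ ∫ s in (0:ℝ)..t, (μ * s + C * t ^ p) := by
      apply intervalIntegral.integral_mono_on ht (hcont.intervalIntegrable _ _)
        (i1.add intervalIntegrable_const)
      intro s hs
      refine le_trans (hptw s hs.1) ?_
      have hst : s ^ p ≤ t ^ p := Real.rpow_le_rpow hs.1 hs.2 hppos.le
      have := mul_le_mul_of_nonneg_left hst hCpos.le
      linarith
    have hb2 : (∫ s in (0:ℝ)..t, (μ * s + C * t ^ p)) = μ / 2 * t ^ 2 + C * t ^ p * t := by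
      rw [intervalIntegral.integral_add i1 intervalIntegrable_const,
        intervalIntegral.integral_const_mul, integral_id,
        intervalIntegral.integral_const]
      simp [smul_eq_mul]; ring
    have hb3 : C * t ^ p * t = C * t ^ ((2 * (N:ℝ)) / ((N:ℝ) - 2)) := by
      rw [hexp, Real.rpow_add_one (ne_of_gt htpos)]; ring
    rw [hb2, hb3] at hb1
    exact hb1
  refine ⟨C, hCpos, fun t => ?_⟩
  rcases le_or_gt 0 t with ht | ht
  · have := main t ht
    rwa [abs_of_nonneg ht]
  · have heven := FOne_even f hodd t
    have hmt : (0:ℝ) ≤ -t := by linarith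
    have := main (-t) hmt
    rw [heven] at this
    rw [abs_of_neg ht]
    constructor
    · exact this.1
    · have h2 := this.2
      have : t ^ 2 = (-t) ^ 2 := by ring
      rw [this]
      exact h2
end

section
/- Let N ≥ 3 be an integer and f : ℝ → ℝ satisfy (f1)–(f4), and set μ := −(1/2)·limsup_{t→0} f(t)/t. Then μ is a finite positive real number, and there exists λ₀ ∈ (0,1) such that λ₀F₁(ζ) − F₂(ζ) > 0, where ζ > 0 is as in (f4); moreover, for every λ ∈ [λ₀, 1] the function f^λ := λf₁ − f₂ is continuous and odd and satisfies (f2), (f3), and (f4) (the last with the same ζ, i.e., F^λ(ζ) := λF₁(ζ) − F₂(ζ) > 0). -/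
open Filter Topology Set MeasureTheory intervalIntegral

/-! (f2) gives `limsup_{t→0} f(t)/t = -2μ < -μ < 0`, so `μ > 0` and `f(t)/t ≤ -μ`
near `0`. Writing `a = f(t)/t`, one has `f₁(t)/t = max(a + 2μ, 0) ∈ [0, μ]`, hence
`f^λ(t)/t = a - (1 - λ) max(a + 2μ, 0)` is bounded below and at most `-μ` for `λ ∈ [0, 1]`.
Since `|f₁(t)| ≤ |f(t)| + 2μ|t|` and the critical exponent exceeds `1`, `f₁` inherits (f3), and
so does every linear combination of `f` and `f₁`. Finally `F₁(ζ) - F₂(ζ) = F(ζ) > 0` and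
`F₂(ζ) ≥ 0` because `f₂(t) ≥ 2μt` for `t ≥ 0`; so `λF₁(ζ) - F₂(ζ)` is increasing in `λ` and
positive at `λ = 1`, and any `λ₀` between `F₂(ζ)/F₁(ζ)` and `1` works. -/

theorem exists_mem_Ioo_forall_le_pos_mul_sub {a b : ℝ} (hb : 0 ≤ b) (hba : b < a) :
    ∃ l₀ ∈ Ioo (0 : ℝ) 1, ∀ l, l₀ ≤ l → 0 < l * a - b := by
  have ha : 0 < a := hb.trans_lt hba
  have hq : b / a < 1 := (div_lt_one ha).2 hba
  have hq₀ : 0 ≤ b / a := div_nonneg hb ha.le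
  refine ⟨(b / a + 1) / 2, ⟨by linarith, by linarith⟩, fun l hl => ?_⟩
  have hmid : (b / a + 1) / 2 * a - b = (a - b) / 2 := by field_simp; ring
  nlinarith [mul_le_mul_of_nonneg_right hl ha.le]

theorem one_lt_criticalExponent {N : ℕ} (hN : 3 ≤ N) : 1 < ((N + 2 : ℝ) / (N - 2)) := by
  have hN' : (3 : ℝ) ≤ N := by exact_mod_cast hN
  rw [lt_div_iff₀ (by linarith)]
  linarith

theorem max_neg_zero_eq_neg_min {α : Type*} [AddCommGroup α] [LinearOrder α]
    [IsOrderedAddMonoid α] (a : α) : max (-a) 0 = -min a 0 := by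
  simpa using max_neg_neg a 0

theorem min_neg_zero_eq_neg_max {α : Type*} [AddCommGroup α] [LinearOrder α]
    [IsOrderedAddMonoid α] (a : α) : min (-a) 0 = -max a 0 := by
  simpa using min_neg_neg a 0

namespace CondF2

variable {f : ℝ → ℝ}

theorem limsup_div_lt_zero (h : CondF2 f) : limsup (fun t => f t / t) (𝓝[≠] (0 : ℝ)) < 0 := by
  obtain ⟨m, M, hM, hlb, hub⟩ := h
  exact (limsup_le_of_le (isBoundedUnder_of_eventually_ge hlb).isCoboundedUnder_le hub).trans_lt hM

theorem muBL_pos (h : CondF2 f) : 0 < muBL f := by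
  unfold muBL
  linarith [h.limsup_div_lt_zero]

theorem eventually_div_le_neg_muBL (h : CondF2 f) :
    ∀ᶠ t in 𝓝[≠] (0 : ℝ), f t / t ≤ -muBL f := by
  have hlt : limsup (fun t => f t / t) (𝓝[≠] (0 : ℝ)) < -muBL f := by
    unfold muBL
    linarith [h.limsup_div_lt_zero]
  obtain ⟨-, M, -, -, hub⟩ := h
  exact (eventually_lt_of_limsup_lt hlt (isBoundedUnder_of_eventually_le hub)).mono
    fun _ => le_of_lt

end CondF2

namespace CondF3

variable {N : ℕ} {f g : ℝ → ℝ}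

theorem const_mul (hf : CondF3 N f) (c : ℝ) : CondF3 N (fun t => c * f t) := by
  simpa only [CondF3, mul_div_assoc, mul_zero] using Tendsto.const_mul c hf

theorem sub (hf : CondF3 N f) (hg : CondF3 N g) : CondF3 N (fun t => f t - g t) := by
  simpa only [CondF3, sub_div, sub_zero] using Tendsto.sub hf hg

theorem of_abs_le_add (hN : 3 ≤ N) (hf : CondF3 N f) (C : ℝ)
    (hg : ∀ t, |g t| ≤ |f t| + C * |t|) : CondF3 N g := by
  set p : ℝ := (N + 2 : ℝ) / (N - 2)
  have hp : 0 < p - 1 := sub_pos.2 (one_lt_criticalExponent hN)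
  have habs : Tendsto (fun t : ℝ => |t|) (comap (fun t : ℝ => |t|) atTop) atTop := tendsto_comap
  have hbound : Tendsto (fun t => |f t / |t| ^ p| + C * |t| ^ (-(p - 1)))
      (comap (fun t : ℝ => |t|) atTop) (𝓝 0) := by
    simpa using (Tendsto.abs hf).add (((tendsto_rpow_neg_atTop hp).comp habs).const_mul C)
  refine squeeze_zero_norm' ?_ hbound
  filter_upwards [habs.eventually (eventually_gt_atTop 0)] with t ht
  have htp : 0 < |t| ^ p := Real.rpow_pos_of_pos ht p
  rw [Real.norm_eq_abs, abs_div, abs_div, abs_of_pos htp, neg_sub, Real.rpow_sub ht,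
    Real.rpow_one, ← mul_div_assoc, ← add_div]
  exact div_le_div_of_nonneg_right (hg t) htp.le

end CondF3

section Truncation

variable {f : ℝ → ℝ}

theorem fOne_neg (hodd : ∀ t, f (-t) = -f t) (t : ℝ) : fOne f (-t) = -fOne f t := by
  have hg : f (-t) + 2 * muBL f * -t = -(f t + 2 * muBL f * t) := by rw [hodd]; ring
  rcases lt_trichotomy t 0 with ht | rfl | ht
  · rw [fOne, fOne, if_pos (by linarith), if_neg (not_le.2 ht), hg, max_neg_zero_eq_neg_min]
  · simp [fOne, Function.Odd.map_zero hodd]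
  · rw [fOne, fOne, if_neg (by linarith), if_pos ht.le, hg, min_neg_zero_eq_neg_max]

theorem continuous_fOne (hf : Continuous f) (hf0 : f 0 = 0) : Continuous (fOne f) := by
  have hg : Continuous fun t => f t + 2 * muBL f * t := by fun_prop
  refine Continuous.if_le (hg.max continuous_const) (hg.min continuous_const)
    continuous_const continuous_id fun t ht => ?_
  subst ht
  simp [hf0]

theorem abs_fOne_le (t : ℝ) : |fOne f t| ≤ |f t| + |2 * muBL f| * |t| := by
  calc |fOne f t| ≤ |f t + 2 * muBL f * t| := ?_
    _ ≤ |f t| + |2 * muBL f * t| := abs_add_le _ _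
    _ = |f t| + |2 * muBL f| * |t| := by rw [abs_mul (2 * muBL f)]
  rw [fOne]
  split_ifs
  · rw [abs_of_nonneg (le_max_right _ _)]
    exact max_le (le_abs_self _) (abs_nonneg _)
  · rw [abs_of_nonpos (min_le_right _ _), ← max_neg_zero_eq_neg_min]
    exact max_le (neg_le_abs _) (abs_nonneg _)

theorem fOne_div_self {t : ℝ} (ht : t ≠ 0) :
    fOne f t / t = max (f t / t + 2 * muBL f) 0 := by
  have hsplit : f t / t + 2 * muBL f = (f t + 2 * muBL f * t) / t := by field_simp
  rw [hsplit, fOne]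
  rcases ht.lt_or_gt with ht | ht
  · rw [if_neg (not_le.2 ht), ← max_div_div_right_of_nonpos ht.le, zero_div]
  · rw [if_pos ht.le, ← max_div_div_right ht.le, zero_div]

theorem fTwo_nonneg (hμ : 0 ≤ muBL f) {t : ℝ} (ht : 0 ≤ t) : 0 ≤ fTwo f t := by
  rw [fTwo, fOne, if_pos ht]
  nlinarith [le_max_left (f t + 2 * muBL f * t) 0, mul_nonneg hμ ht]

theorem FOne_sub_FTwo_eq_integral (hf : Continuous f) (hf0 : f 0 = 0) (x : ℝ) :
    FOne f x - FTwo f x = ∫ s in (0 : ℝ)..x, f s := by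
  have h₁ := continuous_fOne hf hf0
  have h₂ : Continuous (fTwo f) := h₁.sub hf
  rw [FOne, FTwo, ← integral_sub (h₁.intervalIntegrable 0 x) (h₂.intervalIntegrable 0 x)]
  simp only [fTwo, sub_sub_cancel]

end Truncation

theorem condF2_mul_fOne_sub_fTwo {f : ℝ → ℝ} (hf2 : CondF2 f) {lam : ℝ} (hl₀ : 0 ≤ lam)
    (hl₁ : lam ≤ 1) : CondF2 (fun t => lam * fOne f t - fTwo f t) := by
  have hμ := hf2.muBL_pos
  have hub := hf2.eventually_div_le_neg_muBL
  obtain ⟨m, -, -, hlb, -⟩ := hf2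
  refine ⟨m - muBL f, -muBL f, by linarith, ?_, ?_⟩ <;>
  · filter_upwards [hub, hlb, self_mem_nhdsWithin] with t hle hge (ht : t ≠ 0)
    have key : (lam * fOne f t - fTwo f t) / t
        = f t / t - (1 - lam) * max (f t / t + 2 * muBL f) 0 := by
      rw [fTwo, ← fOne_div_self ht]
      ring
    have hmax : max (f t / t + 2 * muBL f) 0 ≤ muBL f := max_le (by linarith) hμ.le
    rw [key]
    nlinarith [le_max_right (f t / t + 2 * muBL f) 0]

theorem statement13 (N : ℕ) (hN : 3 ≤ N) (f : ℝ → ℝ) (hf : Continuous f)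
    (hodd : ∀ t, f (-t) = - f t) (hf2 : CondF2 f) (hf3 : CondF3 N f)
    (ζ : ℝ) (hζ : 0 < ζ) (hF : 0 < ∫ s in (0:ℝ)..ζ, f s) :
    0 < muBL f ∧
    ∃ lam0 ∈ Set.Ioo (0:ℝ) 1, 0 < lam0 * FOne f ζ - FTwo f ζ ∧
      ∀ lam ∈ Set.Icc lam0 1,
        Continuous (fun t => lam * fOne f t - fTwo f t) ∧
        (∀ t, lam * fOne f (-t) - fTwo f (-t) = -(lam * fOne f t - fTwo f t)) ∧
        CondF2 (fun t => lam * fOne f t - fTwo f t) ∧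
        CondF3 N (fun t => lam * fOne f t - fTwo f t) ∧
        0 < lam * FOne f ζ - FTwo f ζ := by
  have hμ := hf2.muBL_pos
  have hf0 : f 0 = 0 := Function.Odd.map_zero hodd
  have h₁ := continuous_fOne hf hf0
  have hF₂ : 0 ≤ FTwo f ζ :=
    integral_nonneg hζ.le fun t ht => fTwo_nonneg hμ.le ht.1
  obtain ⟨lam0, hlam0, hpos⟩ := exists_mem_Ioo_forall_le_pos_mul_sub (a := FOne f ζ) hF₂
    (by linarith [FOne_sub_FTwo_eq_integral hf hf0 ζ])
  have hf3₁ : CondF3 N (fOne f) := hf3.of_abs_le_add hN _ abs_fOne_le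
  refine ⟨hμ, lam0, hlam0, hpos lam0 le_rfl, fun lam ⟨hlam, hlam1⟩ =>
    ⟨?_, ?_, ?_, ?_, hpos lam hlam⟩⟩
  · exact (continuous_const.mul h₁).sub (h₁.sub hf)
  · intro t
    simp only [fTwo, fOne_neg hodd, hodd]
    ring
  · exact condF2_mul_fOne_sub_fTwo hf2 (hlam0.1.le.trans hlam) hlam1
  · exact (hf3₁.const_mul lam).sub (hf3₁.sub hf3)
end
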